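/- Let f₁, f₂ be linearly independent analytic solutions of f'' + A f = 0 in 𝔻, where A is analytic in 𝔻, and suppose f₁, f₂ belong to the Nevanlinna class, i.e. for j=1,2 there exists a positive harmonic function h_j on 𝔻 with |f_j(z)| ≤ e^{h_j(z)} for all z∈𝔻. Then there exists a positive harmonic function H on 𝔻 such that |A(z)|(1-|z|²)³ ≤ e^{H(z)} and ( |W(f₁,f₂)| / (|f₁(z)|² + |f₂(z)|²) )(1-|z|²)² ≤ e^{H(z)} for all z∈𝔻. -/

import Mathlib

open Complex MeasureTheory Metric Set
open scoped BigOperators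

noncomputable section

/-- The open unit disc in ℂ. -/
def oDisc : Set ℂ := {z : ℂ | ‖z‖ < 1}

/-- `f` is an analytic solution of `f'' + A f = 0` on the unit disc. -/
def IsSolution (A f : ℂ → ℂ) : Prop :=
  DifferentiableOn ℂ f oDisc ∧ ∀ z ∈ oDisc, deriv (deriv f) z + A z * f z = 0

/-- `f₁, f₂` are linearly independent as functions on the unit disc. -/
def LinIndep (f₁ f₂ : ℂ → ℂ) : Prop :=
  ∀ a b : ℂ, (∀ z ∈ oDisc, a * f₁ z + b * f₂ z = 0) → a = 0 ∧ b = 0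

/-- The (pointwise) Wronskian `W(f₁,f₂) = f₁ f₂' - f₁' f₂`. -/
def Wr (f₁ f₂ : ℂ → ℂ) (z : ℂ) : ℂ := f₁ z * deriv f₂ z - deriv f₁ z * f₂ z

/-- `w(z) dm(z)` (on the unit disc) is a Carleson measure. -/
def IsCarleson (w : ℂ → ℝ) : Prop :=
  ∃ C : ℝ, ∀ a ∈ oDisc,
    (∫⁻ z in oDisc,
      ENNReal.ofReal (w z * ((1 - ‖a‖ ^ 2) / ‖1 - (starRingEnd ℂ) a * z‖ ^ 2)))
      ≤ ENNReal.ofReal C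

/-- A sequence in the unit disc is uniformly separated. -/
def UniformlySeparated (z : ℕ → ℂ) : Prop :=
  ∃ δ : ℝ, 0 < δ ∧ ∀ n : ℕ, ∀ F : Finset ℕ, n ∉ F →
    δ ≤ ∏ k ∈ F, ‖(z k - z n) / (1 - (starRingEnd ℂ) (z k) * z n)‖

/-- Harmonic on the unit disc (equivalently, real part of an analytic function). -/
def HarmonicOnDisc (h : ℂ → ℝ) : Prop :=
  ∃ g : ℂ → ℂ, DifferentiableOn ℂ g oDisc ∧ ∀ z ∈ oDisc, h z = (g z).re

/-- Positive harmonic function on the unit disc. -/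
def PosHarmonic (h : ℂ → ℝ) : Prop :=
  HarmonicOnDisc h ∧ ∀ z ∈ oDisc, 0 < h z

/-- Pseudo-hyperbolic disc of radius δ centred at a. -/
def pDisc (a : ℂ) (δ : ℝ) : Set ℂ :=
  {w ∈ oDisc | ‖(w - a) / (1 - (starRingEnd ℂ) a * w)‖ < δ}

/-- The Laplacian Δu = ∂²u/∂x² + ∂²u/∂y² of a real-valued function on ℂ ≅ ℝ². -/
def lapl (u : ℂ → ℝ) (z : ℂ) : ℝ :=
  fderiv ℝ (fun w => fderiv ℝ u w 1) z 1
    + fderiv ℝ (fun w => fderiv ℝ u w Complex.I) z Complex.I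

/-- |∇u|² = (∂u/∂x)² + (∂u/∂y)². -/
def gradSq (u : ℂ → ℝ) (z : ℂ) : ℝ :=
  (fderiv ℝ u z 1) ^ 2 + (fderiv ℝ u z Complex.I) ^ 2

/-- The Wirtinger derivative ∂ = (1/2)(∂/∂x - i ∂/∂y). -/
def wirt (g : ℂ → ℂ) (z : ℂ) : ℂ :=
  (1 / 2 : ℂ) * (fderiv ℝ g z 1 - Complex.I * fderiv ℝ g z Complex.I)

/-- The auxiliary function u = log((|f₁|²+|f₂|²)/|W(f₁,f₂)|) = -log (f₁/f₂)^#. -/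
def uAux (f₁ f₂ : ℂ → ℂ) (z : ℂ) : ℝ :=
  Real.log ((‖f₁ z‖ ^ 2 + ‖f₂ z‖ ^ 2) / ‖Wr f₁ f₂ z‖)

/-- The conformal automorphism φ_a(z) = (a-z)/(1-conj(a) z). -/
def moebius (a z : ℂ) : ℂ := (a - z) / (1 - (starRingEnd ℂ) a * z)

/-- A single Blaschke factor. -/
def blaschkeFactor (a z : ℂ) : ℂ :=
  if a = 0 then z else ((‖a‖ : ℂ) / a) * ((a - z) / (1 - (starRingEnd ℂ) a * z))

/-- The Blaschke product with zeros `zs`. -/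
def blaschkeProd (zs : ℕ → ℂ) (z : ℂ) : ℂ := ∏' n, blaschkeFactor (zs n) z

/-- `f` is bounded on the unit disc. -/
def BoundedOnDisc (f : ℂ → ℂ) : Prop := ∃ M : ℝ, ∀ z ∈ oDisc, ‖f z‖ ≤ M



lemma oDisc_eq : oDisc = Metric.ball (0:ℂ) 1 := by
  ext z; simp [oDisc, Metric.mem_ball, dist_zero_right]

lemma isOpen_oDisc : IsOpen oDisc := by rw [oDisc_eq]; exact isOpen_ball

lemma convex_oDisc : Convex ℝ oDisc := by rw [oDisc_eq]; exact convex_ball 0 1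

lemma ball_subset_oDisc {z : ℂ} (hz : z ∈ oDisc) : Metric.ball z (1 - ‖z‖) ⊆ oDisc := by
  intro w hw
  simp only [Metric.mem_ball, dist_eq_norm] at hw
  have : ‖w‖ ≤ ‖w - z‖ + ‖z‖ := by
    simpa using norm_add_le (w - z) z
  simp only [oDisc, Set.mem_setOf_eq] at *
  linarith

lemma norm_sq_formula (x : ℂ) : ‖x‖^2 = x.re^2 + x.im^2 := by
  rw [Complex.sq_norm, Complex.normSq_apply]
  ring

/-- Harnack's inequality on half-discs, via the Schwarz lemma. -/
lemma harnack {g : ℂ → ℂ} (hg : DifferentiableOn ℂ g oDisc)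
    (hpos : ∀ z ∈ oDisc, 0 < (g z).re) {z w : ℂ} (hz : z ∈ oDisc)
    (hw : w ∈ Metric.ball z ((1 - ‖z‖)/2)) : (g w).re ≤ 3 * (g z).re := by
  set p := g z with hp
  have hD : (0:ℝ) < 1 - ‖z‖ := by simpa [oDisc] using hz
  have hsub : Metric.ball z (1 - ‖z‖) ⊆ oDisc := ball_subset_oDisc hz
  have hpre : 0 < p.re := hpos z hz
  have hden : ∀ ζ ∈ Metric.ball z (1 - ‖z‖), g ζ + (starRingEnd ℂ) p ≠ 0 := by
    intro ζ hζ h0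
    have h1 : 0 < (g ζ).re := hpos ζ (hsub hζ)
    have : (g ζ + (starRingEnd ℂ) p).re = (g ζ).re + p.re := by simp
    rw [h0] at this; simp at this; linarith
  set F : ℂ → ℂ := fun ζ => (g ζ - p) / (g ζ + (starRingEnd ℂ) p) with hF
  have hFz : F z = 0 := by simp [hF, ← hp]
  have hFd : DifferentiableOn ℂ F (Metric.ball z (1 - ‖z‖)) := by
    apply DifferentiableOn.div
    · exact (hg.mono hsub).sub (differentiableOn_const _)
    · exact (hg.mono hsub).add (differentiableOn_const _)
    · exact hden
  have key : ∀ s : ℂ, 0 < s.re → ‖s - p‖^2 + 4 * s.re * p.re = ‖s + (starRingEnd ℂ) p‖^2 := by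
    intro s hs
    rw [norm_sq_formula, norm_sq_formula]
    simp [Complex.add_re, Complex.add_im, Complex.sub_re, Complex.sub_im]
    ring
  have hmaps : MapsTo F (Metric.ball z (1 - ‖z‖)) (Metric.ball (F z) 1) := by
    intro ζ hζ
    rw [hFz, Metric.mem_ball, dist_zero_right, hF]
    have h1 : 0 < (g ζ).re := hpos ζ (hsub hζ)
    have hne := hden ζ hζ
    rw [norm_div, div_lt_one (norm_pos_iff.2 hne)]
    have hk := key (g ζ) h1
    nlinarith [norm_nonneg (g ζ - p), norm_nonneg (g ζ + (starRingEnd ℂ) p)]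
  have hw' : w ∈ Metric.ball z (1 - ‖z‖) :=
    Metric.ball_subset_ball (by linarith) hw
  have hSch := Complex.dist_le_div_mul_dist_of_mapsTo_ball hFd (hmaps.mono_right Metric.ball_subset_closedBall) hw'
  rw [hFz, dist_zero_right] at hSch
  have hdist : dist w z < (1 - ‖z‖)/2 := hw
  have hFw : ‖F w‖ ≤ 1/2 := by
    have h2 : (1:ℝ) / (1 - ‖z‖) * dist w z ≤ 1/2 := by
      rw [div_mul_eq_mul_div, one_mul, div_le_div_iff₀ hD (by norm_num)]
      nlinarith [dist_nonneg (x := w) (y := z)]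
    linarith
  set s := g w with hs
  have hne := hden w hw'
  have h1 : ‖s - p‖ ≤ (1/2) * ‖s + (starRingEnd ℂ) p‖ := by
    have : ‖F w‖ = ‖s - p‖ / ‖s + (starRingEnd ℂ) p‖ := by rw [hF]; exact norm_div _ _
    rw [this, div_le_iff₀ (norm_pos_iff.2 hne)] at hFw
    linarith [hFw]
  have h2 : ‖s + (starRingEnd ℂ) p‖ ≤ ‖s - p‖ + 2 * p.re := by
    have : s + (starRingEnd ℂ) p = (s - p) + (p + (starRingEnd ℂ) p) := by ring
    rw [this]
    have h3 : ‖p + (starRingEnd ℂ) p‖ = 2 * p.re := by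
      rw [Complex.add_conj]
      simp only [Complex.norm_real, Real.norm_eq_abs]
      rw [abs_of_pos (by linarith : (0:ℝ) < 2 * p.re)]
    calc ‖(s - p) + (p + (starRingEnd ℂ) p)‖ ≤ ‖s - p‖ + ‖p + (starRingEnd ℂ) p‖ := norm_add_le _ _
    _ = ‖s - p‖ + 2 * p.re := by rw [h3]
  have h4 : ‖s - p‖ ≤ 2 * p.re := by linarith
  have h5 : (s - p).re ≤ ‖s - p‖ := Complex.re_le_norm _
  have : (g w).re = p.re + (s - p).re := by simp [hs]
  linarith


/-- Cauchy-type estimate via the Schwarz lemma. -/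
lemma deriv_bound {f : ℂ → ℂ} {z : ℂ} {r M : ℝ} (hr : 0 < r) (hM : 1 ≤ M)
    (hd : DifferentiableOn ℂ f (Metric.ball z r))
    (hb : ∀ w ∈ Metric.ball z r, ‖f w‖ ≤ M) : ‖deriv f z‖ ≤ 3 * M / r := by
  have hmaps : MapsTo f (Metric.ball z r) (Metric.ball (f z) (3 * M)) := by
    intro w hw
    rw [Metric.mem_ball, dist_eq_norm]
    have h1 : ‖f w - f z‖ ≤ ‖f w‖ + ‖f z‖ := norm_sub_le _ _
    have h2 := hb w hw
    have h3 := hb z (Metric.mem_ball_self hr)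
    linarith
  exact Complex.norm_deriv_le_div_of_mapsTo_ball hd (hmaps.mono_right Metric.ball_subset_closedBall) hr

/-- A function with vanishing derivative on a convex open set is constant. -/
lemma const_of_deriv_zero {s : Set ℂ} (hs : Convex ℝ s) (ho : IsOpen s) {f : ℂ → ℂ}
    (hf : ∀ x ∈ s, HasDerivAt f 0 x) {x y : ℂ} (hx : x ∈ s) (hy : y ∈ s) : f x = f y := by
  apply hs.is_const_of_fderivWithin_eq_zero
    (fun x hx => ((hf x hx).differentiableAt).differentiableWithinAt) ?_ hx hy
  intro w hw
  have h := (hf w hw).hasFDerivAt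
  rw [(h.hasFDerivWithinAt).fderivWithin (ho.uniqueDiffWithinAt hw)]
  ext v; simp

lemma oneMinus_pos {z : ℂ} (hz : z ∈ oDisc) : (0:ℝ) < 1 - ‖z‖ := by
  simpa [oDisc] using hz

lemma half_ball_mem {z w : ℂ} (hz : z ∈ oDisc) (hw : w ∈ Metric.ball z ((1 - ‖z‖)/2)) :
    w ∈ oDisc ∧ (1 - ‖z‖)/2 ≤ 1 - ‖w‖ := by
  have hD := oneMinus_pos hz
  have hd : ‖w - z‖ < (1 - ‖z‖)/2 := by simpa [Metric.mem_ball, dist_eq_norm] using hw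
  have : ‖w‖ ≤ ‖w - z‖ + ‖z‖ := by simpa using norm_add_le (w - z) z
  constructor
  · simp only [oDisc, Set.mem_setOf_eq]; linarith
  · linarith

lemma nevanlinna_deriv_bounds {f g : ℂ → ℂ} {h : ℂ → ℝ}
    (hfd : DifferentiableOn ℂ f oDisc) (hgd : DifferentiableOn ℂ g oDisc)
    (hre : ∀ z ∈ oDisc, h z = (g z).re) (hposh : ∀ z ∈ oDisc, 0 < h z)
    (hN : ∀ z ∈ oDisc, ‖f z‖ ≤ Real.exp (h z)) :
    ∀ z ∈ oDisc, ‖deriv f z‖ ≤ 6 * Real.exp (3 * h z) / (1 - ‖z‖) ∧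
      ‖deriv (deriv f) z‖ ≤ 72 * Real.exp (9 * h z) / (1 - ‖z‖)^2 := by
  have hgpos : ∀ z ∈ oDisc, 0 < (g z).re := fun z hz => (hre z hz) ▸ hposh z hz
  have Hk : ∀ z ∈ oDisc, ∀ w ∈ Metric.ball z ((1 - ‖z‖)/2), h w ≤ 3 * h z := by
    intro z hz w hw
    have hw' := (half_ball_mem hz hw).1
    have := harnack hgd hgpos hz hw
    rw [← hre w hw', ← hre z hz] at this; exact this
  have first : ∀ z ∈ oDisc, ‖deriv f z‖ ≤ 6 * Real.exp (3 * h z) / (1 - ‖z‖) := by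
    intro z hz
    have hD := oneMinus_pos hz
    have hr : (0:ℝ) < (1 - ‖z‖)/2 := by linarith
    have hsub : Metric.ball z ((1 - ‖z‖)/2) ⊆ oDisc := fun w hw => (half_ball_mem hz hw).1
    have hM : (1:ℝ) ≤ Real.exp (3 * h z) :=
      Real.one_le_exp (by nlinarith [hposh z hz])
    have hb : ∀ w ∈ Metric.ball z ((1 - ‖z‖)/2), ‖f w‖ ≤ Real.exp (3 * h z) := by
      intro w hw
      exact le_trans (hN w (hsub hw)) (Real.exp_le_exp.2 (by linarith [Hk z hz w hw]))
    have := deriv_bound hr hM (hfd.mono hsub) hb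
    calc ‖deriv f z‖ ≤ 3 * Real.exp (3 * h z) / ((1 - ‖z‖)/2) := this
      _ = 6 * Real.exp (3 * h z) / (1 - ‖z‖) := by field_simp; ring
  intro z hz
  refine ⟨first z hz, ?_⟩
  have hD := oneMinus_pos hz
  have hr : (0:ℝ) < (1 - ‖z‖)/2 := by linarith
  have hsub : Metric.ball z ((1 - ‖z‖)/2) ⊆ oDisc := fun w hw => (half_ball_mem hz hw).1
  have hdfd : DifferentiableOn ℂ (deriv f) oDisc :=
    ((hfd.analyticOnNhd isOpen_oDisc).deriv).differentiableOn
  have hexp1 : (1:ℝ) ≤ Real.exp (9 * h z) := Real.one_le_exp (by nlinarith [hposh z hz])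
  set M : ℝ := 12 * Real.exp (9 * h z) / (1 - ‖z‖) with hMdef
  have hM1 : (1:ℝ) ≤ M := by
    rw [hMdef, le_div_iff₀ hD]
    nlinarith [norm_nonneg z, hexp1]
  have hb : ∀ w ∈ Metric.ball z ((1 - ‖z‖)/2), ‖deriv f w‖ ≤ M := by
    intro w hw
    obtain ⟨hw1, hw2⟩ := half_ball_mem hz hw
    have h1 := (first w hw1)
    have h2 : Real.exp (3 * h w) ≤ Real.exp (9 * h z) :=
      Real.exp_le_exp.2 (by nlinarith [Hk z hz w hw, hposh z hz])
    have hDw := oneMinus_pos hw1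
    calc ‖deriv f w‖ ≤ 6 * Real.exp (3 * h w) / (1 - ‖w‖) := h1
      _ ≤ 6 * Real.exp (9 * h z) / ((1 - ‖z‖)/2) := by
          apply div_le_div₀ (by positivity) (by nlinarith) hr hw2
      _ = M := by rw [hMdef]; field_simp; ring
  have := deriv_bound hr hM1 (hdfd.mono hsub) hb
  calc ‖deriv (deriv f) z‖ ≤ 3 * M / ((1 - ‖z‖)/2) := this
    _ = 72 * Real.exp (9 * h z) / (1 - ‖z‖)^2 := by rw [hMdef]; field_simp; ring




lemma zero_mem_oDisc : (0:ℂ) ∈ oDisc := by simp [oDisc]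

lemma hasDerivAt_of_sol {A f : ℂ → ℂ} (hf : IsSolution A f) {z : ℂ} (hz : z ∈ oDisc) :
    HasDerivAt f (deriv f z) z ∧ HasDerivAt (deriv f) (deriv (deriv f) z) z := by
  constructor
  · exact (hf.1.differentiableAt (isOpen_oDisc.mem_nhds hz)).hasDerivAt
  · exact (((hf.1.analyticOnNhd isOpen_oDisc).deriv.differentiableOn).differentiableAt
      (isOpen_oDisc.mem_nhds hz)).hasDerivAt

lemma wr_const {A f₁ f₂ : ℂ → ℂ} (hf₁ : IsSolution A f₁) (hf₂ : IsSolution A f₂) :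
    ∀ z ∈ oDisc, Wr f₁ f₂ z = Wr f₁ f₂ 0 := by
  intro z hz
  apply const_of_deriv_zero convex_oDisc isOpen_oDisc _ hz zero_mem_oDisc
  intro x hx
  obtain ⟨h₁, h₁'⟩ := hasDerivAt_of_sol hf₁ hx
  obtain ⟨h₂, h₂'⟩ := hasDerivAt_of_sol hf₂ hx
  have hode₁ : deriv (deriv f₁) x = -(A x * f₁ x) := by
    have := hf₁.2 x hx; linear_combination this
  have hode₂ : deriv (deriv f₂) x = -(A x * f₂ x) := by
    have := hf₂.2 x hx; linear_combination this
  have H := (h₁.mul h₂').sub (h₁'.mul h₂)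
  refine H.congr_deriv ?_
  rw [hode₁, hode₂]; ring

lemma wr_ne_zero {A f₁ f₂ : ℂ → ℂ} (hf₁ : IsSolution A f₁) (hf₂ : IsSolution A f₂)
    (hli : LinIndep f₁ f₂) : Wr f₁ f₂ 0 ≠ 0 := by
  intro h0
  have hconst : ∀ z ∈ oDisc, Wr f₁ f₂ z = 0 := fun z hz => (wr_const hf₁ hf₂ z hz).trans h0
  -- f₂ is not identically zero
  have hex : ∃ z₀ ∈ oDisc, f₂ z₀ ≠ 0 := by
    by_contra hc
    push_neg at hc
    have := hli 0 1 (fun z hz => by rw [hc z hz]; ring)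
    exact one_ne_zero this.2
  obtain ⟨z₀, hz₀, hfz₀⟩ := hex
  have hev : ∀ᶠ w in nhds z₀, w ∈ oDisc ∧ f₂ w ≠ 0 := by
    have h1 : ∀ᶠ w in nhds z₀, w ∈ oDisc := isOpen_oDisc.mem_nhds hz₀
    have h2 : ∀ᶠ w in nhds z₀, f₂ w ≠ 0 :=
      ((hf₂.1.differentiableAt (isOpen_oDisc.mem_nhds hz₀)).continuousAt).eventually_ne hfz₀
    exact h1.and h2
  obtain ⟨ρ, hρ, hball⟩ := Metric.eventually_nhds_iff_ball.1 hev
  set c := f₁ z₀ / f₂ z₀ with hc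
  have hφconst : ∀ ζ ∈ Metric.ball z₀ ρ, f₁ ζ / f₂ ζ = c := by
    intro ζ hζ
    apply const_of_deriv_zero (convex_ball z₀ ρ) Metric.isOpen_ball _ hζ (Metric.mem_ball_self hρ)
    intro x hx
    obtain ⟨hx1, hx2⟩ := hball x hx
    obtain ⟨h₁, _⟩ := hasDerivAt_of_sol hf₁ hx1
    obtain ⟨h₂, _⟩ := hasDerivAt_of_sol hf₂ hx1
    have H := h₁.div h₂ hx2
    refine H.congr_deriv ?_
    have hw := hconst x hx1
    simp only [Wr] at hw
    rw [show deriv f₁ x * f₂ x - f₁ x * deriv f₂ x = -(Wr f₁ f₂ x) by unfold Wr; ring,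
      hconst x hx1]
    simp
  have hev2 : f₁ =ᶠ[nhds z₀] (fun ζ => c * f₂ ζ) := by
    filter_upwards [Metric.ball_mem_nhds z₀ hρ] with ζ hζ
    have := hφconst ζ hζ
    have hne := (hball ζ hζ).2
    simpa using (div_eq_iff hne).1 this
  have heq : Set.EqOn f₁ (fun ζ => c * f₂ ζ) oDisc := by
    apply (hf₁.1.analyticOnNhd isOpen_oDisc).eqOn_of_preconnected_of_eventuallyEq
      ((analyticOnNhd_const).mul (hf₂.1.analyticOnNhd isOpen_oDisc))
      convex_oDisc.isPreconnected hz₀ hev2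
  have := hli 1 (-c) (fun z hz => by rw [one_mul, heq hz]; ring)
  exact one_ne_zero this.1

set_option maxHeartbeats 1000000 in
/-- Nevanlinna-class solutions give exponential-of-harmonic growth
estimates for A and for the spherical derivative of the quotient. -/
theorem stmt10 (A f₁ f₂ : ℂ → ℂ) (hA : DifferentiableOn ℂ A oDisc)
    (hf₁ : IsSolution A f₁) (hf₂ : IsSolution A f₂) (hli : LinIndep f₁ f₂)
    (h₁ h₂ : ℂ → ℝ) (hh₁ : PosHarmonic h₁) (hh₂ : PosHarmonic h₂)
    (hN₁ : ∀ z ∈ oDisc, ‖f₁ z‖ ≤ Real.exp (h₁ z))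
    (hN₂ : ∀ z ∈ oDisc, ‖f₂ z‖ ≤ Real.exp (h₂ z)) :
    ∃ H : ℂ → ℝ, PosHarmonic H ∧
      ∀ z ∈ oDisc,
        ‖A z‖ * (1 - ‖z‖ ^ 2) ^ 3 ≤ Real.exp (H z) ∧
        ‖Wr f₁ f₂ z‖ / (‖f₁ z‖ ^ 2 + ‖f₂ z‖ ^ 2) * (1 - ‖z‖ ^ 2) ^ 2
          ≤ Real.exp (H z) := by
  obtain ⟨⟨g₁, hg₁d, hg₁re⟩, hp₁⟩ := hh₁
  obtain ⟨⟨g₂, hg₂d, hg₂re⟩, hp₂⟩ := hh₂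
  obtain ⟨w₀, hw₀def⟩ : ∃ w, w = Wr f₁ f₂ 0 := ⟨_, rfl⟩
  have hw₀ : w₀ ≠ 0 := by rw [hw₀def]; exact wr_ne_zero hf₁ hf₂ hli
  have hW : 0 < ‖w₀‖ := norm_pos_iff.2 hw₀
  have bnds₁ := nevanlinna_deriv_bounds hf₁.1 hg₁d hg₁re hp₁ hN₁
  have bnds₂ := nevanlinna_deriv_bounds hf₂.1 hg₂d hg₂re hp₂ hN₂
  obtain ⟨C₀, hC₀def⟩ : ∃ c : ℝ, c = max 1 (Real.log (6912 / ‖w₀‖) + 1) := ⟨_, rfl⟩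
  have hC₀1 : (1:ℝ) ≤ C₀ := by rw [hC₀def]; exact le_max_left _ _
  have hC₀exp : 6912 / ‖w₀‖ ≤ Real.exp C₀ := by
    have hx : (0:ℝ) < 6912 / ‖w₀‖ := by positivity
    calc 6912 / ‖w₀‖ = Real.exp (Real.log (6912 / ‖w₀‖)) := (Real.exp_log hx).symm
      _ ≤ Real.exp C₀ := by
          apply Real.exp_le_exp.2
          rw [hC₀def]
          exact le_trans (by linarith) (le_max_right _ _)
  refine ⟨fun z => 18 * (h₁ z + h₂ z) + C₀, ⟨⟨fun z => 18 * (g₁ z + g₂ z) + (C₀:ℂ), ?_, ?_⟩, ?_⟩, ?_⟩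
  · exact (((hg₁d.add hg₂d).const_mul 18).add_const _)
  · intro z hz
    simp only [Complex.add_re, Complex.mul_re, Complex.ofReal_re, Complex.ofReal_im,
      Complex.re_ofNat, Complex.im_ofNat, hg₁re z hz, hg₂re z hz]
    ring
  · intro z hz
    show 0 < 18 * (h₁ z + h₂ z) + C₀
    have := hp₁ z hz; have := hp₂ z hz; linarith
  intro z hz
  show ‖A z‖ * (1 - ‖z‖ ^ 2) ^ 3 ≤ Real.exp (18 * (h₁ z + h₂ z) + C₀) ∧
    ‖Wr f₁ f₂ z‖ / (‖f₁ z‖ ^ 2 + ‖f₂ z‖ ^ 2) * (1 - ‖z‖ ^ 2) ^ 2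
      ≤ Real.exp (18 * (h₁ z + h₂ z) + C₀)
  have hD : (0:ℝ) < 1 - ‖z‖ := oneMinus_pos hz
  have ht0 : (0:ℝ) ≤ ‖z‖ := norm_nonneg z
  have hh1 := hp₁ z hz
  have hh2 := hp₂ z hz
  obtain ⟨D, hDdef⟩ : ∃ d : ℝ, 1 - ‖z‖ = d := ⟨_, rfl⟩
  rw [hDdef] at hD
  obtain ⟨E9, hE9def⟩ : ∃ e : ℝ, e = Real.exp (9 * (h₁ z + h₂ z)) := ⟨_, rfl⟩
  obtain ⟨E, hEdef⟩ : ∃ e : ℝ, e = Real.exp (18 * (h₁ z + h₂ z)) := ⟨_, rfl⟩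
  have hE9sq : E9 * E9 = E := by rw [hE9def, hEdef, ← Real.exp_add]; ring_nf
  have hE9pos : (0:ℝ) < E9 := hE9def ▸ Real.exp_pos _
  have hEpos : (0:ℝ) < E := hEdef ▸ Real.exp_pos _
  have hexpH : Real.exp (18 * (h₁ z + h₂ z) + C₀) = E * Real.exp C₀ := by
    rw [hEdef, Real.exp_add]
  -- derivative bounds
  have hmono1 : Real.exp (3 * h₁ z) ≤ E9 := by
    rw [hE9def]; exact Real.exp_le_exp.2 (by nlinarith)
  have hd1 : ‖deriv f₁ z‖ ≤ 6 * E9 / D := by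
    refine le_trans (bnds₁ z hz).1 ?_
    rw [hDdef]; gcongr
  have hmono2 : Real.exp (3 * h₂ z) ≤ E9 := by
    rw [hE9def]; exact Real.exp_le_exp.2 (by nlinarith)
  have hd2 : ‖deriv f₂ z‖ ≤ 6 * E9 / D := by
    refine le_trans (bnds₂ z hz).1 ?_
    rw [hDdef]; gcongr
  have hmono91 : Real.exp (9 * h₁ z) ≤ E9 := by
    rw [hE9def]; exact Real.exp_le_exp.2 (by nlinarith)
  have hdd1 : ‖deriv (deriv f₁) z‖ ≤ 72 * E9 / D ^ 2 := by
    refine le_trans (bnds₁ z hz).2 ?_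
    rw [hDdef]; gcongr
  have hmono92 : Real.exp (9 * h₂ z) ≤ E9 := by
    rw [hE9def]; exact Real.exp_le_exp.2 (by nlinarith)
  have hdd2 : ‖deriv (deriv f₂) z‖ ≤ 72 * E9 / D ^ 2 := by
    refine le_trans (bnds₂ z hz).2 ?_
    rw [hDdef]; gcongr
  have hWz : Wr f₁ f₂ z = w₀ := (wr_const hf₁ hf₂ z hz).trans hw₀def.symm
  -- Part 1 : the bound on A
  have hode₁ : deriv (deriv f₁) z = -(A z * f₁ z) := by linear_combination hf₁.2 z hz
  have hode₂ : deriv (deriv f₂) z = -(A z * f₂ z) := by linear_combination hf₂.2 z hz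
  have hAW : A z * w₀ = deriv f₁ z * deriv (deriv f₂) z - deriv (deriv f₁) z * deriv f₂ z := by
    rw [← hWz, hode₁, hode₂]
    unfold Wr; ring
  have hnormAW : ‖A z‖ * ‖w₀‖ ≤ 864 * E / D ^ 3 := by
    have h1 : ‖A z‖ * ‖w₀‖ = ‖A z * w₀‖ := (norm_mul _ _).symm
    rw [h1, hAW]
    calc ‖deriv f₁ z * deriv (deriv f₂) z - deriv (deriv f₁) z * deriv f₂ z‖
        ≤ ‖deriv f₁ z * deriv (deriv f₂) z‖ + ‖deriv (deriv f₁) z * deriv f₂ z‖ :=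
          norm_sub_le _ _
      _ = ‖deriv f₁ z‖ * ‖deriv (deriv f₂) z‖ + ‖deriv (deriv f₁) z‖ * ‖deriv f₂ z‖ := by
          rw [norm_mul, norm_mul]
      _ ≤ (6 * E9 / D) * (72 * E9 / D ^ 2) + (72 * E9 / D ^ 2) * (6 * E9 / D) := by
          gcongr <;> first | exact norm_nonneg _ | assumption
      _ = 864 * (E9 * E9) / D ^ 3 := by field_simp; ring
      _ = 864 * E / D ^ 3 := by rw [hE9sq]
  have hA3 : ‖A z‖ * D ^ 3 ≤ 864 * E / ‖w₀‖ := by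
    rw [le_div_iff₀ hW]
    have h2 : (‖A z‖ * ‖w₀‖) * D ^ 3 ≤ (864 * E / D ^ 3) * D ^ 3 := by gcongr
    have h3 : (864 * E / D ^ 3) * D ^ 3 = 864 * E := by field_simp
    calc ‖A z‖ * D ^ 3 * ‖w₀‖ = (‖A z‖ * ‖w₀‖) * D ^ 3 := by ring
      _ ≤ (864 * E / D ^ 3) * D ^ 3 := h2
      _ = 864 * E := h3
  have hone : (0:ℝ) ≤ 1 - ‖z‖ ^ 2 := by nlinarith [hDdef]
  have h2D : 1 - ‖z‖ ^ 2 ≤ 2 * D := by nlinarith [hDdef]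
  constructor
  · calc ‖A z‖ * (1 - ‖z‖ ^ 2) ^ 3 ≤ ‖A z‖ * (2 * D) ^ 3 := by
          gcongr
      _ = 8 * (‖A z‖ * D ^ 3) := by ring
      _ ≤ 8 * (864 * E / ‖w₀‖) := by gcongr
      _ = E * (6912 / ‖w₀‖) := by ring
      _ ≤ E * Real.exp C₀ := by gcongr
      _ = Real.exp (18 * (h₁ z + h₂ z) + C₀) := hexpH.symm
  -- Part 2 : the spherical derivative bound
  · obtain ⟨S, hSdef⟩ : ∃ s : ℝ, s = ‖f₁ z‖ ^ 2 + ‖f₂ z‖ ^ 2 := ⟨_, rfl⟩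
    have hwle : ‖w₀‖ * D ≤ (‖f₁ z‖ + ‖f₂ z‖) * (6 * E9) := by
      have h1 : ‖w₀‖ ≤ ‖f₁ z‖ * ‖deriv f₂ z‖ + ‖deriv f₁ z‖ * ‖f₂ z‖ := by
        rw [← hWz]
        calc ‖Wr f₁ f₂ z‖ ≤ ‖f₁ z * deriv f₂ z‖ + ‖deriv f₁ z * f₂ z‖ := norm_sub_le _ _
          _ = _ := by rw [norm_mul, norm_mul]
      have hd1' : ‖deriv f₁ z‖ * D ≤ 6 * E9 := by
        rw [div_eq_mul_inv] at hd1
        calc ‖deriv f₁ z‖ * D ≤ (6 * E9 * D⁻¹) * D := by gcongr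
          _ = 6 * E9 := by field_simp
      have hd2' : ‖deriv f₂ z‖ * D ≤ 6 * E9 := by
        rw [div_eq_mul_inv] at hd2
        calc ‖deriv f₂ z‖ * D ≤ (6 * E9 * D⁻¹) * D := by gcongr
          _ = 6 * E9 := by field_simp
      calc ‖w₀‖ * D ≤ (‖f₁ z‖ * ‖deriv f₂ z‖ + ‖deriv f₁ z‖ * ‖f₂ z‖) * D := by
            gcongr
        _ = ‖f₁ z‖ * (‖deriv f₂ z‖ * D) + (‖deriv f₁ z‖ * D) * ‖f₂ z‖ := by ring
        _ ≤ ‖f₁ z‖ * (6 * E9) + (6 * E9) * ‖f₂ z‖ := by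
            gcongr <;> first | exact norm_nonneg _ | assumption
        _ = (‖f₁ z‖ + ‖f₂ z‖) * (6 * E9) := by ring
    have h2S : (‖f₁ z‖ + ‖f₂ z‖) ^ 2 ≤ 2 * S := by
      rw [hSdef]; nlinarith [sq_nonneg (‖f₁ z‖ - ‖f₂ z‖)]
    have hS : ‖w₀‖ ^ 2 * D ^ 2 ≤ 72 * E * S := by
      have hsq := mul_self_le_mul_self (mul_nonneg (norm_nonneg w₀) hD.le) hwle
      have hkey : (0:ℝ) ≤ E * (2 * S - (‖f₁ z‖ + ‖f₂ z‖) ^ 2) :=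
        mul_nonneg hEpos.le (by linarith)
      have hE2 : 36 * (E9 * E9) * (‖f₁ z‖ + ‖f₂ z‖) ^ 2
          = 36 * E * (‖f₁ z‖ + ‖f₂ z‖) ^ 2 := by rw [hE9sq]
      nlinarith [hsq, hE2, hkey]
    have hSpos : (0:ℝ) < S := by
      by_contra hcon
      push_neg at hcon
      have hpos : (0:ℝ) < ‖w₀‖ ^ 2 * D ^ 2 := by positivity
      nlinarith [mul_nonneg hEpos.le (neg_nonneg.2 hcon)]
    rw [hWz, ← hSdef, div_mul_eq_mul_div, div_le_iff₀ hSpos]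
    have hwD2 : ‖w₀‖ * D ^ 2 ≤ 72 * E * S / ‖w₀‖ := by
      rw [le_div_iff₀ hW]
      nlinarith [hS]
    calc ‖w₀‖ * (1 - ‖z‖ ^ 2) ^ 2 ≤ ‖w₀‖ * (2 * D) ^ 2 := by
          gcongr
      _ = 4 * (‖w₀‖ * D ^ 2) := by ring
      _ ≤ 4 * (72 * E * S / ‖w₀‖) := by gcongr
      _ = (E * S) * (288 / ‖w₀‖) := by ring
      _ ≤ (E * S) * Real.exp C₀ := by
          apply mul_le_mul_of_nonneg_left _ (by positivity)
          calc (288:ℝ) / ‖w₀‖ ≤ 6912 / ‖w₀‖ := by gcongr; norm_num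
            _ ≤ Real.exp C₀ := hC₀exp
      _ = Real.exp (18 * (h₁ z + h₂ z) + C₀) * S := by rw [hexpH]; ring
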